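/- Let A be a positive operator on H and T, S A-bounded operators. Then r_A(T + S) ≤ ½(ω_A(T) + ω_A(S) + √((ω_A(T) − ω_A(S))² + 4 min{‖TS‖_A, ‖ST‖_A})). -/

import Mathlib

open ContinuousLinearMap

variable {H : Type*} [NormedAddCommGroup H] [InnerProductSpace ℂ H] [CompleteSpace H]

/-- The seminorm `‖x‖_A = ‖A^{1/2} x‖ = √⟨Ax, x⟩` induced by a positive operator `A`. -/
noncomputable def anorm (A : H →L[ℂ] H) (x : H) : ℝ :=
  Real.sqrt (A.reApplyInnerSelf x)

/-- `T` is `A`-bounded: `‖Tx‖_A ≤ c ‖x‖_A` for some `c > 0`. -/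
def ABounded (A T : H →L[ℂ] H) : Prop :=
  ∃ c : ℝ, 0 < c ∧ ∀ x : H, anorm A (T x) ≤ c * anorm A x

/-- The operator seminorm `‖T‖_A`: the least `c ≥ 0` with `‖Tx‖_A ≤ c ‖x‖_A` for all `x`. -/
noncomputable def aNorm (A T : H →L[ℂ] H) : ℝ :=
  sInf {c : ℝ | 0 ≤ c ∧ ∀ x : H, anorm A (T x) ≤ c * anorm A x}

/-- The `A`-spectral radius `r_A(T) = inf_{n ≥ 1} ‖T^n‖_A^{1/n}`. -/
noncomputable def aSpecRad (A T : H →L[ℂ] H) : ℝ :=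
  ⨅ n : ℕ+, aNorm A (T ^ (n : ℕ)) ^ ((n : ℝ)⁻¹)

/-- The `A`-numerical radius `ω_A(T) = sup {|⟨ATx, x⟩| : ‖x‖_A = 1}`. -/
noncomputable def aNumRad (A T : H →L[ℂ] H) : ℝ :=
  sSup {c : ℝ | ∃ x : H, anorm A x = 1 ∧ c = ‖(inner ℂ (A (T x)) x : ℂ)‖}

/-!
Two reductions. First, `x ↦ A^{1/2} x` maps `(H, ‖·‖_A)` isometrically onto a dense subspace of
the Hilbert space `closure (range A^{1/2})`, and every `A`-bounded `T` extends from there to a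
bounded operator `W_T` on that space with `⟪W_T v, v⟫` controlled by `ω_A(T)`, `‖W_T W_S‖ ≤ ‖TS‖_A`
and `‖(T + S)^n‖_A ≤ ‖(W_T + W_S)^n‖`; by Gelfand's formula `r_A(T + S) ≤ r(W_T + W_S)`.

Second, on a Hilbert space `P + Q = Y X` with `X v = (P v, t v)` and `Y (u, w) = u + t⁻¹ Q w`.
Since `YX` and `XY` have the same nonzero spectrum, `r(P + Q)` is at most the numerical radius of
the operator matrix `XY = [[P, t⁻¹ PQ], [t, Q]]`, which is bounded by the largest eigenvalue of
`[[a, c/2], [c/2, b]]` with `c = t + ‖PQ‖ / t`. Letting `t² → ‖PQ‖` gives the bound with `‖TS‖_A`;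
exchanging `T` and `S` gives the one with `‖ST‖_A`.
-/

open scoped InnerProductSpace ComplexConjugate ENNReal
open Filter Topology

section SpectrumComm

variable {𝕜 E F : Type*} [NormedField 𝕜] [NormedAddCommGroup E] [NormedSpace 𝕜 E]
  [NormedAddCommGroup F] [NormedSpace 𝕜 F]

theorem isUnit_algebraMap_sub_comp_comm {X : E →L[𝕜] F} {Y : F →L[𝕜] E} {z : 𝕜} (hz : z ≠ 0)
    (h : IsUnit (algebraMap 𝕜 (F →L[𝕜] F) z - X ∘L Y)) :
    IsUnit (algebraMap 𝕜 (E →L[𝕜] E) z - Y ∘L X) := by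
  obtain ⟨U, hU₁, hU₂⟩ := isUnit_iff_exists.mp h
  have h₁ (w : F) : X (Y (U w)) = z • U w - w := by
    rw [eq_sub_iff_add_eq, add_comm, ← eq_sub_iff_add_eq]
    simpa [Algebra.algebraMap_eq_smul_one] using congr($hU₁ w).symm
  have h₂ (w : F) : U (z • w - X (Y w)) = w := by
    simpa [Algebra.algebraMap_eq_smul_one] using congr($hU₂ w)
  -- the inverse is `z⁻¹ (1 + Y U X)` where `U = (z - XY)⁻¹`
  refine isUnit_iff_exists.mpr ⟨z⁻¹ • (1 + Y ∘L U ∘L X), ?_, ?_⟩ <;> ext v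
  · simp [Algebra.algebraMap_eq_smul_one, smul_sub, h₁, smul_smul, hz]
  · have hw : (algebraMap 𝕜 (E →L[𝕜] E) z - Y ∘L X) v = z • v - Y (X v) := by
      simp [Algebra.algebraMap_eq_smul_one]
    have h₃ : U (X (z • v - Y (X v))) = X v := by rw [map_sub, map_smul]; exact h₂ _
    rw [mul_apply_eq_comp, hw, smul_apply, add_apply, one_apply_eq_self, comp_apply, comp_apply,
      h₃, sub_add_cancel, smul_smul, inv_mul_cancel₀ hz, one_smul, one_apply_eq_self]

end SpectrumComm

section Hilbert

variable {E F : Type*} [NormedAddCommGroup E] [InnerProductSpace ℂ E] [CompleteSpace E]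
  [NormedAddCommGroup F] [NormedSpace ℂ F]

theorem isUnit_algebraMap_sub_of_norm_inner_le {M : E →L[ℂ] E} {ρ : ℝ}
    (hM : ∀ v, ‖⟪M v, v⟫_ℂ‖ ≤ ρ * ‖v‖ ^ 2) {z : ℂ} (hz : ρ < ‖z‖) :
    IsUnit (algebraMap ℂ (E →L[ℂ] E) z - M) := by
  refine isUnit_of_forall_le_norm_inner_map _ (c := (‖z‖ - ρ).toNNReal)
    (Real.toNNReal_pos.mpr (sub_pos.mpr hz)) fun v => ?_
  have h : ⟪(algebraMap ℂ (E →L[ℂ] E) z - M) v, v⟫_ℂ = conj z * (‖v‖ ^ 2 : ℝ) - ⟪M v, v⟫_ℂ := by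
    simp [Algebra.algebraMap_eq_smul_one, inner_self_eq_norm_sq_to_K, mul_comm]
  calc ‖v‖ ^ 2 * (‖z‖ - ρ).toNNReal = ‖v‖ ^ 2 * (‖z‖ - ρ) := by
        rw [Real.coe_toNNReal _ (sub_pos.mpr hz).le]
    _ ≤ ‖z‖ * ‖v‖ ^ 2 - ‖⟪M v, v⟫_ℂ‖ := by nlinarith [hM v]
    _ = ‖conj z * (‖v‖ ^ 2 : ℝ)‖ - ‖⟪M v, v⟫_ℂ‖ := by simp
    _ ≤ _ := by rw [h]; exact norm_sub_norm_le _ _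

theorem spectralRadius_comp_le_of_norm_inner_le {X : F →L[ℂ] E} {Y : E →L[ℂ] F} {ρ : ℝ}
    (h : ∀ w, ‖⟪X (Y w), w⟫_ℂ‖ ≤ ρ * ‖w‖ ^ 2) :
    spectralRadius ℂ (Y ∘L X) ≤ ENNReal.ofReal ρ := by
  refine iSup₂_le fun z hz => ?_
  by_contra! hlt
  rw [← enorm_eq_nnnorm, ← ofReal_norm, ENNReal.ofReal_lt_ofReal_iff'] at hlt
  exact spectrum.mem_iff.mp hz <| isUnit_algebraMap_sub_comp_comm (norm_pos_iff.mp hlt.2)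
    (isUnit_algebraMap_sub_of_norm_inner_le h hlt.1)

theorem quadratic_form_le_max_eigenvalue (a b c x y : ℝ) :
    a * x ^ 2 + b * y ^ 2 + c * (x * y) ≤
      (a + b + √((a - b) ^ 2 + c ^ 2)) / 2 * (x ^ 2 + y ^ 2) := by
  set s := √((a - b) ^ 2 + c ^ 2)
  have hs : s ^ 2 = (a - b) ^ 2 + c ^ 2 := Real.sq_sqrt (by positivity)
  rcases (Real.sqrt_nonneg _ : 0 ≤ s).eq_or_lt with hs0 | hs0
  · have hab : a = b := by nlinarith [sq_nonneg (a - b), sq_nonneg c]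
    have hc : c = 0 := by nlinarith [sq_nonneg (a - b), sq_nonneg c]
    rw [show s = 0 from hs0.symm, hab, hc]; linarith
  · refine le_of_mul_le_mul_left ?_ (by positivity : 0 < 4 * s)
    nlinarith [sq_nonneg ((s - a + b) * x - c * y), sq_nonneg ((s + a - b) * y - c * x)]

theorem spectralRadius_add_le_of_pos {P Q : E →L[ℂ] E} {a b m t : ℝ} (ht : 0 < t)
    (hP : ∀ v, ‖⟪P v, v⟫_ℂ‖ ≤ a * ‖v‖ ^ 2) (hQ : ∀ v, ‖⟪Q v, v⟫_ℂ‖ ≤ b * ‖v‖ ^ 2)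
    (hPQ : ∀ v, ‖P (Q v)‖ ≤ m * ‖v‖) :
    spectralRadius ℂ (P + Q) ≤
      ENNReal.ofReal ((a + b + √((a - b) ^ 2 + (t + m / t) ^ 2)) / 2) := by
  let X : E →L[ℂ] WithLp 2 (E × E) :=
    (WithLp.prodContinuousLinearEquiv 2 ℂ E E).symm.toContinuousLinearMap ∘L P.prod (t • 1)
  let Y : WithLp 2 (E × E) →L[ℂ] E :=
    (1 : E →L[ℂ] E).coprod (t⁻¹ • Q) ∘L
      (WithLp.prodContinuousLinearEquiv 2 ℂ E E).toContinuousLinearMap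
  have hYX : Y ∘L X = P + Q := by
    ext v
    simp [X, Y, WithLp.prodContinuousLinearEquiv_symm_apply, smul_smul, ht.ne']
  rw [← hYX]
  refine spectralRadius_comp_le_of_norm_inner_le fun z => ?_
  set u := z.fst
  set w := z.snd
  have hPQw : ‖⟪P (Q w), u⟫_ℂ‖ ≤ m * (‖u‖ * ‖w‖) := calc
    _ ≤ ‖P (Q w)‖ * ‖u‖ := norm_inner_le_norm _ _
    _ ≤ m * ‖w‖ * ‖u‖ := by gcongr; exact hPQ w
    _ = _ := by ring
  calc ‖⟪X (Y z), z⟫_ℂ‖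
      = ‖⟪P u, u⟫_ℂ + t⁻¹ * ⟪P (Q w), u⟫_ℂ + t * ⟪u, w⟫_ℂ + ⟪Q w, w⟫_ℂ‖ := by
        congr 1
        simp [X, Y, WithLp.prod_inner_apply, inner_add_left, smul_smul, ht.ne',
          inner_smul_left_eq_smul, Complex.real_smul, u, w]
        ring
    _ ≤ a * ‖u‖ ^ 2 + t⁻¹ * (m * (‖u‖ * ‖w‖)) + t * (‖u‖ * ‖w‖) + b * ‖w‖ ^ 2 := by
        refine norm_add₄_le.trans ?_
        simp only [norm_mul, Complex.norm_real, norm_inv, Real.norm_of_nonneg ht.le]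
        gcongr
        exacts [hP u, norm_inner_le_norm u w, hQ w]
    _ = a * ‖u‖ ^ 2 + b * ‖w‖ ^ 2 + (t + m / t) * (‖u‖ * ‖w‖) := by ring
    _ ≤ _ * (‖u‖ ^ 2 + ‖w‖ ^ 2) := quadratic_form_le_max_eigenvalue ..
    _ = _ := by rw [WithLp.prod_norm_sq_eq_of_L2]

theorem exists_pos_add_div_sq_le {m ε : ℝ} (hm : 0 ≤ m) (hε : 0 < ε) :
    ∃ t > 0, (t + m / t) ^ 2 ≤ 4 * m + ε := by
  have hmε : 0 < m + ε := by linarith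
  refine ⟨√(m + ε), Real.sqrt_pos.mpr hmε, ?_⟩
  have hsq : √(m + ε) ^ 2 = m + ε := Real.sq_sqrt hmε.le
  have : (√(m + ε) + m / √(m + ε)) ^ 2 = (2 * m + ε) ^ 2 / (m + ε) := by
    field_simp
    rw [hsq]; ring
  rw [this, div_le_iff₀ hmε]
  nlinarith

theorem spectralRadius_add_le {P Q : E →L[ℂ] E} {a b m : ℝ}
    (hP : ∀ v, ‖⟪P v, v⟫_ℂ‖ ≤ a * ‖v‖ ^ 2) (hQ : ∀ v, ‖⟪Q v, v⟫_ℂ‖ ≤ b * ‖v‖ ^ 2)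
    (hm : 0 ≤ m) (hPQ : ∀ v, ‖P (Q v)‖ ≤ m * ‖v‖) :
    spectralRadius ℂ (P + Q) ≤ ENNReal.ofReal ((a + b + √((a - b) ^ 2 + 4 * m)) / 2) := by
  have hlim : Tendsto (fun ε => ENNReal.ofReal ((a + b + √((a - b) ^ 2 + (4 * m + ε))) / 2))
      (𝓝[>] 0) (𝓝 (ENNReal.ofReal ((a + b + √((a - b) ^ 2 + 4 * m)) / 2))) := by
    have hc : Continuous fun ε => ENNReal.ofReal ((a + b + √((a - b) ^ 2 + (4 * m + ε))) / 2) :=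
      ENNReal.continuous_ofReal.comp (by fun_prop)
    simpa using hc.tendsto 0 |>.mono_left nhdsWithin_le_nhds
  refine ge_of_tendsto hlim (eventually_nhdsWithin_of_forall fun ε hε => ?_)
  obtain ⟨t, ht, hle⟩ := exists_pos_add_div_sq_le hm hε
  exact (spectralRadius_add_le_of_pos ht hP hQ hPQ).trans (by gcongr)

end Hilbert
theorem inner_sqrt_apply_sqrt_apply {A : H →L[ℂ] H} (hA : A.IsPositive) (x y : H) :
    ⟪CFC.sqrt A y, CFC.sqrt A x⟫_ℂ = ⟪A y, x⟫_ℂ := by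
  have hsymm := isSelfAdjoint_iff_isSymmetric.mp (CFC.sqrt_nonneg A).isSelfAdjoint
  calc ⟪CFC.sqrt A y, CFC.sqrt A x⟫_ℂ = ⟪CFC.sqrt A (CFC.sqrt A y), x⟫_ℂ := (hsymm _ _).symm
    _ = ⟪A y, x⟫_ℂ := by
      rw [← mul_apply_eq_comp, CFC.sqrt_mul_sqrt_self A ((nonneg_iff_isPositive A).mpr hA)]

theorem anorm_eq_norm_sqrt_apply {A : H →L[ℂ] H} (hA : A.IsPositive) (x : H) :
    anorm A x = ‖CFC.sqrt A x‖ := by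
  rw [anorm, reApplyInnerSelf_apply, ← inner_sqrt_apply_sqrt_apply hA, inner_self_eq_norm_sq,
    Real.sqrt_sq (norm_nonneg _)]

theorem anorm_smul {A : H →L[ℂ] H} (hA : A.IsPositive) (c : ℂ) (x : H) :
    anorm A (c • x) = ‖c‖ * anorm A x := by
  rw [anorm_eq_norm_sqrt_apply hA, anorm_eq_norm_sqrt_apply hA, map_smul, norm_smul]

theorem norm_inner_apply_le_anorm_mul {A : H →L[ℂ] H} (hA : A.IsPositive) (x y : H) :
    ‖⟪A y, x⟫_ℂ‖ ≤ anorm A y * anorm A x := by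
  rw [← inner_sqrt_apply_sqrt_apply hA, anorm_eq_norm_sqrt_apply hA, anorm_eq_norm_sqrt_apply hA]
  exact norm_inner_le_norm _ _

omit [CompleteSpace H] in
theorem anorm_nonneg (A : H →L[ℂ] H) (x : H) : 0 ≤ anorm A x := Real.sqrt_nonneg _

omit [CompleteSpace H] in
theorem aNorm_nonneg (A T : H →L[ℂ] H) : 0 ≤ aNorm A T :=
  Real.sInf_nonneg fun _ hc => hc.1

omit [CompleteSpace H] in
theorem aNumRad_nonneg (A T : H →L[ℂ] H) : 0 ≤ aNumRad A T :=
  Real.sSup_nonneg fun _ ⟨_, _, hc⟩ => hc ▸ norm_nonneg _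

omit [CompleteSpace H] in
theorem ABounded.mul {A T S : H →L[ℂ] H} (hT : ABounded A T) (hS : ABounded A S) :
    ABounded A (T * S) := by
  obtain ⟨c, hc, hT⟩ := hT
  obtain ⟨d, hd, hS⟩ := hS
  exact ⟨c * d, mul_pos hc hd, fun x => (hT (S x)).trans <| by
    rw [mul_assoc]; exact mul_le_mul_of_nonneg_left (hS x) hc.le⟩

omit [CompleteSpace H] in
theorem anorm_apply_le_aNorm_mul {A T : H →L[ℂ] H} (hT : ABounded A T) (x : H) :
    anorm A (T x) ≤ aNorm A T * anorm A x := by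
  obtain ⟨c, hc, hT⟩ := hT
  rcases (anorm_nonneg A x).eq_or_lt with h0 | hpos
  · simpa [← h0] using hT x
  · rw [← div_le_iff₀ hpos]
    exact le_csInf ⟨c, hc.le, hT⟩ fun d hd => (div_le_iff₀ hpos).mpr (hd.2 x)

theorem norm_inner_le_aNumRad_mul {A T : H →L[ℂ] H} (hA : A.IsPositive) (hT : ABounded A T)
    (x : H) : ‖⟪A (T x), x⟫_ℂ‖ ≤ aNumRad A T * anorm A x ^ 2 := by
  obtain ⟨c, -, hc⟩ := hT
  have hbdd : BddAbove {r : ℝ | ∃ x : H, anorm A x = 1 ∧ r = ‖⟪A (T x), x⟫_ℂ‖} := by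
    refine ⟨c, fun r ⟨y, hy, hr⟩ => ?_⟩
    simpa [hr, hy] using (norm_inner_apply_le_anorm_mul hA y (T y)).trans
      (mul_le_mul_of_nonneg_right (hc y) (anorm_nonneg A y))
  rcases (anorm_nonneg A x).eq_or_lt with h0 | hpos
  · simpa [← h0] using (norm_inner_apply_le_anorm_mul hA x (T x))
  · set s := anorm A x
    have hy : anorm A ((s⁻¹ : ℂ) • x) = 1 := by
      rw [anorm_smul hA, norm_inv, Complex.norm_real, Real.norm_of_nonneg hpos.le,
        inv_mul_cancel₀ hpos.ne']
    have key : s⁻¹ * (‖⟪A (T x), x⟫_ℂ‖ * s⁻¹) ≤ aNumRad A T := by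
      simpa [abs_of_pos hpos, aNumRad] using le_csSup hbdd ⟨_, hy, rfl⟩
    calc ‖⟪A (T x), x⟫_ℂ‖ = s⁻¹ * (‖⟪A (T x), x⟫_ℂ‖ * s⁻¹) * s ^ 2 := by field_simp
      _ ≤ aNumRad A T * s ^ 2 := by gcongr

noncomputable def aSpace (A : H →L[ℂ] H) : Submodule ℂ H :=
  (LinearMap.range ((CFC.sqrt A : H →L[ℂ] H) : H →ₗ[ℂ] H)).topologicalClosure

instance (A : H →L[ℂ] H) : CompleteSpace (aSpace A) :=
  (Submodule.isClosed_topologicalClosure _).completeSpace_coe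

noncomputable def toASpace (A : H →L[ℂ] H) : H →ₗ[ℂ] aSpace A :=
  ((CFC.sqrt A : H →L[ℂ] H) : H →ₗ[ℂ] H).codRestrict (aSpace A) fun x =>
    Submodule.le_topologicalClosure _ (LinearMap.mem_range_self _ x)

theorem norm_toASpace {A : H →L[ℂ] H} (hA : A.IsPositive) (x : H) :
    ‖toASpace A x‖ = anorm A x :=
  (anorm_eq_norm_sqrt_apply hA x).symm

theorem inner_toASpace {A : H →L[ℂ] H} (hA : A.IsPositive) (x y : H) :
    ⟪toASpace A y, toASpace A x⟫_ℂ = ⟪A y, x⟫_ℂ :=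
  inner_sqrt_apply_sqrt_apply hA x y

theorem denseRange_toASpace (A : H →L[ℂ] H) : DenseRange (toASpace A) := by
  rw [DenseRange, Subtype.dense_iff, ← Set.range_comp]
  exact (Submodule.topologicalClosure_coe _).le

noncomputable def aLift (A T : H →L[ℂ] H) : aSpace A →L[ℂ] aSpace A :=
  (toASpace A ∘ₗ (T : H →ₗ[ℂ] H)).extendOfNorm (toASpace A)

theorem aLift_toASpace {A T : H →L[ℂ] H} (hA : A.IsPositive) (hT : ABounded A T) (x : H) :
    aLift A T (toASpace A x) = toASpace A (T x) := by
  obtain ⟨c, -, hc⟩ := hT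
  exact LinearMap.extendOfNorm_eq (denseRange_toASpace A) ⟨c, fun x => by
    simpa [norm_toASpace hA] using hc x⟩ x

theorem norm_inner_aLift_le {A T : H →L[ℂ] H} (hA : A.IsPositive) (hT : ABounded A T)
    (v : aSpace A) : ‖⟪aLift A T v, v⟫_ℂ‖ ≤ aNumRad A T * ‖v‖ ^ 2 := by
  refine (denseRange_toASpace A).induction_on v (isClosed_le (by fun_prop) (by fun_prop))
    fun x => ?_
  rw [aLift_toASpace hA hT, inner_toASpace hA, norm_toASpace hA]
  exact norm_inner_le_aNumRad_mul hA hT x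

theorem norm_aLift_aLift_le {A T S : H →L[ℂ] H} (hA : A.IsPositive) (hT : ABounded A T)
    (hS : ABounded A S) (v : aSpace A) : ‖aLift A T (aLift A S v)‖ ≤ aNorm A (T * S) * ‖v‖ := by
  refine (denseRange_toASpace A).induction_on v (isClosed_le (by fun_prop) (by fun_prop))
    fun x => ?_
  rw [aLift_toASpace hA hS, aLift_toASpace hA hT, norm_toASpace hA, norm_toASpace hA]
  exact anorm_apply_le_aNorm_mul (hT.mul hS) x

theorem aNorm_pow_le_norm_pow {A X : H →L[ℂ] H} (hA : A.IsPositive) {W : aSpace A →L[ℂ] aSpace A}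
    (hW : Function.Semiconj (toASpace A) X W) (n : ℕ) : aNorm A (X ^ n) ≤ ‖W ^ n‖ := by
  refine csInf_le ⟨0, fun _ hc => hc.1⟩ ⟨opNorm_nonneg _, fun x => ?_⟩
  have h := hW.iterate_right n x
  rw [← FunLike.coe_pow_eq_iterate, ← FunLike.coe_pow_eq_iterate] at h
  rw [← norm_toASpace hA, ← norm_toASpace hA, h]
  exact le_opNorm _ _

theorem ofReal_aSpecRad_le_spectralRadius {A X : H →L[ℂ] H} (hA : A.IsPositive)
    {W : aSpace A →L[ℂ] aSpace A} (hW : Function.Semiconj (toASpace A) X W) :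
    ENNReal.ofReal (aSpecRad A X) ≤ spectralRadius ℂ W := by
  refine ge_of_tendsto (spectrum.pow_nnnorm_pow_one_div_tendsto_nhds_spectralRadius W)
    ((eventually_ge_atTop 1).mono fun n hn => ?_)
  have hbdd : BddBelow (Set.range fun n : ℕ+ => aNorm A (X ^ (n : ℕ)) ^ ((n : ℝ)⁻¹)) :=
    ⟨0, Set.forall_mem_range.mpr fun n => Real.rpow_nonneg (aNorm_nonneg A _) _⟩
  have h₁ : aSpecRad A X ≤ aNorm A (X ^ n) ^ ((n : ℝ)⁻¹) := ciInf_le hbdd ⟨n, hn⟩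
  have h₂ : aNorm A (X ^ n) ^ ((n : ℝ)⁻¹) ≤ ‖W ^ n‖ ^ ((n : ℝ)⁻¹) :=
    Real.rpow_le_rpow (aNorm_nonneg A _) (aNorm_pow_le_norm_pow hA hW n) (by positivity)
  rw [← enorm_eq_nnnorm, ← ofReal_norm, ENNReal.ofReal_rpow_of_nonneg (norm_nonneg _)
    (by positivity), one_div]
  exact ENNReal.ofReal_le_ofReal (h₁.trans h₂)

theorem aSpecRad_add_le {A T S : H →L[ℂ] H} (hA : A.IsPositive) (hT : ABounded A T)
    (hS : ABounded A S) :
    aSpecRad A (T + S) ≤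
      (aNumRad A T + aNumRad A S +
        √((aNumRad A T - aNumRad A S) ^ 2 + 4 * aNorm A (T * S))) / 2 := by
  have hW : Function.Semiconj (toASpace A) (T + S) (aLift A T + aLift A S) := fun x => by
    simp [aLift_toASpace hA hT, aLift_toASpace hA hS]
  have hωT := aNumRad_nonneg A T
  have hωS := aNumRad_nonneg A S
  rw [← ENNReal.ofReal_le_ofReal_iff (by positivity)]
  exact (ofReal_aSpecRad_le_spectralRadius hA hW).trans <|
    spectralRadius_add_le (norm_inner_aLift_le hA hT) (norm_inner_aLift_le hA hS)
      (aNorm_nonneg A _) (norm_aLift_aLift_le hA hT hS)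

theorem stmt15 (A T S : H →L[ℂ] H) (hA : A.IsPositive)
    (hT : ABounded A T) (hS : ABounded A S) :
    aSpecRad A (T + S) ≤
      (aNumRad A T + aNumRad A S +
        Real.sqrt ((aNumRad A T - aNumRad A S) ^ 2 +
          4 * min (aNorm A (T * S)) (aNorm A (S * T)))) / 2 := by
  rcases le_total (aNorm A (T * S)) (aNorm A (S * T)) with h | h
  · rw [min_eq_left h]
    exact aSpecRad_add_le hA hT hS
  · rw [min_eq_right h, add_comm T S, add_comm (aNumRad A T), ← neg_sub, neg_sq]
    exact aSpecRad_add_le hA hS hT
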